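/- Let I be a nonempty finite index set, and for each i ∈ I let X_i be a nonempty finite set; write X = ∏_{i∈I} X_i. Fix an action a, and for each i ∈ I let Q_i : X_i × X → ℝ be a conditional probability (Q_i(v|x) ≥ 0 and ∑_{v∈X_i} Q_i(v|x) = 1 for every x ∈ X), and let Par(i) ⊆ I be such that Q_i(v|x) = Q_i(v|x̃) whenever x and x̃ agree on all coordinates in Par(i). Suppose the transition function is factored: P(x'|x,a) = ∏_{i∈I} Q_i(x'_i|x). Let I_k ⊆ I be nonempty and parent-closed, i.e., Par(i) ⊆ I_k for all i ∈ I_k, and let f_k(x) = (x_i)_{i∈I_k} ∈ Y = ∏_{i∈I_k} X_i. Then: (1) for every x ∈ X and y' ∈ Y, ∑_{x' : f_k(x') = y'} P(x'|x,a) = ∏_{i∈I_k} Q_i(y'_i|x); (2) this quantity depends on x only through f_k(x), so P_k(y'|y,a) = ∏_{i∈I_k} Q_i(y'_i|x) for any x with f_k(x) = y is well defined; and (3) P_k(·|y,a) is a probability distribution on Y for every y ∈ Y. -/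
import Mathlib


open Finset

lemma sum_prod_pi_eq_one {ι : Type*} [Fintype ι] [DecidableEq ι]
    (B : ι → Type*) [∀ i, Fintype (B i)] [∀ i, DecidableEq (B i)]
    (R : ∀ i, B i → ℝ) (hR : ∀ i, ∑ v, R i v = 1) :
    ∑ g : ∀ i, B i, ∏ i, R i (g i) = 1 := by
  have h := Finset.prod_univ_sum (fun i : ι => (Finset.univ : Finset (B i))) (fun i v => R i v)
  simpa [hR] using h.symm

/-- Suppose the transition function of a factored MDP factors, for a
fixed action `a`, as `P(x'|x,a) = ∏_i Q_i(x'_i | x)`, where each `Q_i` is a conditional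
probability depending on `x` only through the parent coordinates `Par i`. If the
attention set `I_k` is nonempty and parent-closed (`Par i ⊆ I_k` for all `i ∈ I_k`) and
`f_k(x) = (x_i)_{i ∈ I_k}`, then:
(1) for all `x` and `y'`, `∑_{x' : f_k x' = y'} P(x'|x,a) = ∏_{i ∈ I_k} Q_i(y'_i | x)`;
(2) this quantity depends on `x` only through `f_k(x)` (so
    `P_k(y'|y,a) = ∏_{i ∈ I_k} Q_i(y'_i | x)` for any `x` with `f_k(x) = y` is well
    defined); and
(3) `P_k(·|y,a)` is a probability distribution on `Y = ∏_{i ∈ I_k} X_i`. -/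
theorem factored_attentional_transition
    {I : Type*} [Fintype I] [Nonempty I] [DecidableEq I]
    (Xi : I → Type*) [∀ i, Fintype (Xi i)] [∀ i, Nonempty (Xi i)]
    [∀ i, DecidableEq (Xi i)]
    {A : Type*} (a : A)
    (Q : ∀ i, Xi i → (∀ j, Xi j) → ℝ)
    (hQ0 : ∀ i v x, 0 ≤ Q i v x)
    (hQ1 : ∀ i x, ∑ v, Q i v x = 1)
    (Par : I → Finset I)
    (hQpar : ∀ i v (x xt : ∀ j, Xi j), (∀ j ∈ Par i, x j = xt j) → Q i v x = Q i v xt)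
    (P : (∀ i, Xi i) → A → (∀ i, Xi i) → ℝ)
    (hfact : ∀ x x', P x a x' = ∏ i, Q i (x' i) x)
    (Ik : Finset I) (hIk : Ik.Nonempty)
    (hclosed : ∀ i ∈ Ik, Par i ⊆ Ik) :
    (∀ (x : ∀ i, Xi i) (y' : ∀ i : Ik, Xi i),
      ∑ x' ∈ Finset.univ.filter (fun x' : ∀ i, Xi i => (fun i : Ik => x' i) = y'),
        P x a x' = ∏ i : Ik, Q i (y' i) x) ∧
    (∀ (x xt : ∀ i, Xi i) (y' : ∀ i : Ik, Xi i),
      (fun i : Ik => x i) = (fun i : Ik => xt i) →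
      ∏ i : Ik, Q i (y' i) x = ∏ i : Ik, Q i (y' i) xt) ∧
    (∀ x : ∀ i, Xi i,
      (∀ y' : ∀ i : Ik, Xi i, 0 ≤ ∏ i : Ik, Q i (y' i) x) ∧
      ∑ y' : ∀ i : Ik, Xi i, ∏ i : Ik, Q i (y' i) x = 1) := by
  classical
  refine ⟨?_, ?_, ?_⟩
  · intro x y'
    rw [Finset.sum_filter,
      ← Equiv.sum_comp (Equiv.piEquivPiSubtypeProd (fun i => i ∈ Ik) Xi).symm
        (fun x' => if (fun i : Ik => x' i) = y' then P x a x' else 0),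
      Fintype.sum_prod_type]
    have hcond : ∀ (u : ∀ i : {i // i ∈ Ik}, Xi i) (w : ∀ i : {i // ¬ i ∈ Ik}, Xi i),
        (fun i : Ik =>
          (Equiv.piEquivPiSubtypeProd (fun i => i ∈ Ik) Xi).symm (u, w) i) = u := by
      intro u w
      funext i
      simp [Equiv.piEquivPiSubtypeProd_symm_apply, i.2]
    simp only [hcond]
    rw [Finset.sum_comm]
    simp only [Finset.sum_ite_eq' Finset.univ y', Finset.mem_univ, if_true]
    have hsplit : ∀ (w : ∀ i : {i // ¬ i ∈ Ik}, Xi i),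
        P x a ((Equiv.piEquivPiSubtypeProd (fun i => i ∈ Ik) Xi).symm (y', w)) =
          (∏ i : Ik, Q i (y' i) x) * ∏ i : {i // ¬ i ∈ Ik}, Q i (w i) x := by
      intro w
      rw [hfact, ← Finset.prod_mul_prod_compl Ik
        (fun i => Q i ((Equiv.piEquivPiSubtypeProd (fun i => i ∈ Ik) Xi).symm (y', w) i) x)]
      congr 1
      · exact (Finset.prod_subtype Ik (fun x => Iff.rfl)
          (fun i => Q i ((Equiv.piEquivPiSubtypeProd (fun i => i ∈ Ik) Xi).symm (y', w) i) x)).trans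
          (Finset.prod_congr rfl fun i _ => by
            congr 1
            simp [Equiv.piEquivPiSubtypeProd_symm_apply, i.2])
      · exact (Finset.prod_subtype Ikᶜ (fun x => Finset.mem_compl)
          (fun i => Q i ((Equiv.piEquivPiSubtypeProd (fun i => i ∈ Ik) Xi).symm (y', w) i) x)).trans
          (Finset.prod_congr rfl fun i _ => by
            congr 1
            simp [Equiv.piEquivPiSubtypeProd_symm_apply, i.2])
    simp only [hsplit]
    rw [← Finset.mul_sum,
      sum_prod_pi_eq_one (fun i : {i // ¬ i ∈ Ik} => Xi i) (fun i v => Q i v x)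
        (fun i => hQ1 i x), mul_one]
  · intro x xt y' h
    exact Finset.prod_congr rfl fun i _ =>
      hQpar i (y' i) x xt fun j hj => congrFun h ⟨j, hclosed i i.2 hj⟩
  · intro x
    exact ⟨fun y' => Finset.prod_nonneg fun i _ => hQ0 i (y' i) x,
      sum_prod_pi_eq_one (fun i : Ik => Xi i) (fun i v => Q i v x) (fun i => hQ1 i x)⟩
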